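/- arXiv:2502.14657 — 9 statements merged into one kernel-verified Lean document; each statement's English description precedes it below -/
import Mathlib

section
/- Let σ, τ ∈ S_n and suppose the pair (σ, τ) avoids the pattern (12,12), i.e., there are no indices i < j with σ(i) < σ(j) and τ(i) < τ(j). Then for all 1 ≤ i < j ≤ n, either r_σ(i) > r_σ(j) or l_τ(i) < l_τ(j). -/
def rInv {n : ℕ} (σ : Equiv.Perm (Fin n)) (i : Fin n) : ℕ :=
  (Finset.univ.filter (fun j => i < j ∧ σ j < σ i)).card

def lInv {n : ℕ} (σ : Equiv.Perm (Fin n)) (i : Fin n) : ℕ :=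
  (Finset.univ.filter (fun j => j < i ∧ σ i < σ j)).card

/-- `(σ,τ)` avoids the pattern `(12,12)`. -/
def Avoids1212 {n : ℕ} (σ τ : Equiv.Perm (Fin n)) : Prop :=
  ∀ i j : Fin n, i < j → ¬(σ i < σ j ∧ τ i < τ j)

theorem inv_of_avoids1212 {n : ℕ} (σ τ : Equiv.Perm (Fin n))
    (h : Avoids1212 σ τ) :
    ∀ i j : Fin n, i < j → rInv σ j < rInv σ i ∨ lInv τ i < lInv τ j := by
  intro i j hij
  rcases lt_or_gt_of_ne (σ.injective.ne (ne_of_lt hij) : σ i ≠ σ j) with h1 | h1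
  · right
    have hτ : τ j < τ i := by
      rcases lt_trichotomy (τ i) (τ j) with h2 | h2 | h2
      · exact absurd ⟨h1, h2⟩ (h i j hij)
      · exact absurd (τ.injective h2) (ne_of_lt hij)
      · exact h2
    unfold lInv
    apply Finset.card_lt_card
    constructor
    · intro k hk
      simp only [Finset.mem_filter, Finset.mem_univ, true_and] at *
      exact ⟨hk.1.trans hij, hτ.trans hk.2⟩
    · intro hsub
      have := hsub (Finset.mem_filter.mpr ⟨Finset.mem_univ i, hij, hτ⟩)
      simp only [Finset.mem_filter, Finset.mem_univ, true_and] at this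
      exact lt_irrefl _ this.1
  · left
    unfold rInv
    apply Finset.card_lt_card
    constructor
    · intro k hk
      simp only [Finset.mem_filter, Finset.mem_univ, true_and] at *
      exact ⟨hij.trans hk.1, hk.2.trans h1⟩
    · intro hsub
      have := hsub (Finset.mem_filter.mpr ⟨Finset.mem_univ j, hij, h1⟩)
      simp only [Finset.mem_filter, Finset.mem_univ, true_and] at this
      exact lt_irrefl _ this.1
end

section
/- Let (σ, τ) be a pair of permutations of {1,...,n} avoiding the pattern (12,12). Then the map i ↦ (r_σ(i), l_τ(i)) from {1,...,n} to ℤ² is injective; in particular the configuration Γ(σ,τ) = {(r_σ(i), l_τ(i)) : 1 ≤ i ≤ n} has exactly n points. -/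
lemma rInv_lt {n : ℕ} (σ : Equiv.Perm (Fin n)) {i j : Fin n} (hij : i < j)
    (hs : σ j < σ i) : rInv σ j < rInv σ i := by
  apply Finset.card_lt_card
  constructor
  · intro k hk
    simp only [Finset.mem_filter, Finset.mem_univ, true_and] at hk ⊢
    exact ⟨lt_trans hij hk.1, lt_trans hk.2 hs⟩
  · intro hsub
    have := hsub (by simp [hij, hs] : j ∈ Finset.univ.filter (fun k => i < k ∧ σ k < σ i))
    simp at this

lemma lInv_lt {n : ℕ} (τ : Equiv.Perm (Fin n)) {i j : Fin n} (hij : i < j)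
    (ht : τ j < τ i) : lInv τ i < lInv τ j := by
  apply Finset.card_lt_card
  constructor
  · intro k hk
    simp only [Finset.mem_filter, Finset.mem_univ, true_and] at hk ⊢
    exact ⟨lt_trans hk.1 hij, lt_trans ht hk.2⟩
  · intro hsub
    have := hsub (by simp [hij, ht] : i ∈ Finset.univ.filter (fun k => k < j ∧ τ j < τ k))
    simp at this

lemma key {n : ℕ} (σ τ : Equiv.Perm (Fin n)) (h : Avoids1212 σ τ)
    {i j : Fin n} (hij : i < j) :
    rInv σ i ≠ rInv σ j ∨ lInv τ i ≠ lInv τ j := by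
  have hne : σ i ≠ σ j := fun hh => (ne_of_lt hij) (σ.injective hh)
  have htne : τ i ≠ τ j := fun hh => (ne_of_lt hij) (τ.injective hh)
  rcases lt_or_gt_of_ne hne with hs | hs
  · rcases lt_or_gt_of_ne htne with ht | ht
    · exact absurd ⟨hs, ht⟩ (h i j hij)
    · exact Or.inr (ne_of_lt (lInv_lt τ hij ht))
  · exact Or.inl (ne_of_lt (rInv_lt σ hij hs)).symm

/-- If `(σ,τ)` avoids `(12,12)` then `i ↦ (r_σ(i), l_τ(i))` is injective;
in particular the configuration `Γ(σ,τ)` has exactly `n` points. -/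
theorem gamma_injective {n : ℕ} (σ τ : Equiv.Perm (Fin n))
    (h : Avoids1212 σ τ) :
    Function.Injective (fun i : Fin n => (((rInv σ i : ℤ), (lInv τ i : ℤ)) : ℤ × ℤ)) ∧
    (Finset.univ.image (fun i : Fin n => (((rInv σ i : ℤ), (lInv τ i : ℤ)) : ℤ × ℤ))).card = n := by
  have hinj : Function.Injective
      (fun i : Fin n => (((rInv σ i : ℤ), (lInv τ i : ℤ)) : ℤ × ℤ)) := by
    intro i j hEq
    simp only [Prod.mk.injEq, Nat.cast_inj] at hEq
    by_contra hne
    rcases lt_or_gt_of_ne hne with hij | hij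
    · rcases key σ τ h hij with hk | hk
      · exact hk hEq.1
      · exact hk hEq.2
    · rcases key σ τ h hij with hk | hk
      · exact hk hEq.1.symm
      · exact hk hEq.2.symm
  refine ⟨hinj, ?_⟩
  rw [Finset.card_image_of_injective _ hinj, Finset.card_univ, Fintype.card_fin]
end

section
/- Let (σ, τ) be a pair of permutations of {1,...,n} avoiding the pattern (12,12). Then the configuration Γ(σ,τ) = {(r_σ(i), l_τ(i)) : 1 ≤ i ≤ n} is sparse: for every k with 1 ≤ k < n and every translated triangle T = {(x,y) : a ≤ x, b ≤ y, x+y < a+b+k} with a,b ∈ ℤ, the set Γ(σ,τ) ∩ T has at most k elements. -/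
lemma rInv_ge_aux {n : ℕ} (σ : Equiv.Perm (Fin n)) (i0 : Fin n) (R : Finset (Fin n))
    (hR : ∀ j ∈ R, i0 < j ∧ σ j < σ i0) (jm : Fin n) (hjm : jm ∈ R)
    (hmax : ∀ j ∈ R, j ≤ jm) : rInv σ jm + R.card ≤ rInv σ i0 := by
  classical
  have hsub : (Finset.univ.filter (fun j => jm < j ∧ σ j < σ jm)) ∪ R ⊆
      (Finset.univ.filter (fun j => i0 < j ∧ σ j < σ i0)) := by
    intro j hj
    rcases Finset.mem_union.mp hj with hj | hj
    · simp only [Finset.mem_filter, Finset.mem_univ, true_and] at hj ⊢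
      exact ⟨lt_trans (hR jm hjm).1 hj.1, lt_trans hj.2 (hR jm hjm).2⟩
    · simp only [Finset.mem_filter, Finset.mem_univ, true_and]
      exact hR j hj
  have hdisj : Disjoint (Finset.univ.filter (fun j => jm < j ∧ σ j < σ jm)) R := by
    rw [Finset.disjoint_left]
    intro j hj hjR
    simp only [Finset.mem_filter, Finset.mem_univ, true_and] at hj
    exact absurd (hmax j hjR) (not_le.mpr hj.1)
  have := Finset.card_le_card hsub
  rwa [Finset.card_union_of_disjoint hdisj] at this

lemma lInv_ge_aux {n : ℕ} (τ : Equiv.Perm (Fin n)) (i0 : Fin n) (L : Finset (Fin n))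
    (hL : ∀ j ∈ L, j < i0 ∧ τ i0 < τ j) (j1 : Fin n) (hj1 : j1 ∈ L)
    (hmin : ∀ j ∈ L, j1 ≤ j) : lInv τ j1 + L.card ≤ lInv τ i0 := by
  classical
  have hsub : (Finset.univ.filter (fun j => j < j1 ∧ τ j1 < τ j)) ∪ L ⊆
      (Finset.univ.filter (fun j => j < i0 ∧ τ i0 < τ j)) := by
    intro j hj
    rcases Finset.mem_union.mp hj with hj | hj
    · simp only [Finset.mem_filter, Finset.mem_univ, true_and] at hj ⊢
      exact ⟨lt_trans hj.1 (hL j1 hj1).1, lt_trans (hL j1 hj1).2 hj.2⟩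
    · simp only [Finset.mem_filter, Finset.mem_univ, true_and]
      exact hL j hj
  have hdisj : Disjoint (Finset.univ.filter (fun j => j < j1 ∧ τ j1 < τ j)) L := by
    rw [Finset.disjoint_left]
    intro j hj hjL
    simp only [Finset.mem_filter, Finset.mem_univ, true_and] at hj
    exact absurd (hmin j hjL) (not_le.mpr hj.1)
  have := Finset.card_le_card hsub
  rwa [Finset.card_union_of_disjoint hdisj] at this

/-- If `(σ,τ)` avoids `(12,12)` then `Γ(σ,τ)` is sparse: any translated triangle
of size `k` (with `1 ≤ k < n`) contains at most `k` of its points. -/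
theorem gamma_sparse {n : ℕ} (σ τ : Equiv.Perm (Fin n)) (h : Avoids1212 σ τ)
    (k : ℕ) (hk1 : 1 ≤ k) (hkn : k < n) (a b : ℤ) :
    ((Finset.univ.image (fun i : Fin n => (((rInv σ i : ℤ), (lInv τ i : ℤ)) : ℤ × ℤ))).filter
      (fun p => a ≤ p.1 ∧ b ≤ p.2 ∧ p.1 + p.2 < a + b + k)).card ≤ k := by
  classical
  set f : Fin n → ℤ × ℤ := fun i => (((rInv σ i : ℤ), (lInv τ i : ℤ)) : ℤ × ℤ) with hf
  set S : Finset (Fin n) := Finset.univ.filter (fun i =>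
      a ≤ (rInv σ i : ℤ) ∧ b ≤ (lInv τ i : ℤ) ∧
      (rInv σ i : ℤ) + (lInv τ i : ℤ) < a + b + k) with hSdef
  have himg : ((Finset.univ.image f).filter
      (fun p => a ≤ p.1 ∧ b ≤ p.2 ∧ p.1 + p.2 < a + b + k)) = S.image f := by
    rw [Finset.filter_image]
  rw [himg]
  refine le_trans (Finset.card_image_le) ?_
  -- main claim : S.card ≤ k
  rcases S.eq_empty_or_nonempty with hS | hS
  · simp [hS]
  obtain ⟨i0, hi0S, hi0max⟩ := S.exists_max_image (fun i => σ i) hS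
  have hmemS : ∀ i ∈ S, a ≤ (rInv σ i : ℤ) ∧ b ≤ (lInv τ i : ℤ) ∧
      (rInv σ i : ℤ) + (lInv τ i : ℤ) < a + b + k := by
    intro i hi
    simpa [hSdef] using hi
  set L : Finset (Fin n) := S.filter (fun j => j < i0) with hLdef
  set R : Finset (Fin n) := S.filter (fun j => i0 < j) with hRdef
  -- σ strict inequalities
  have hsigma : ∀ j ∈ S, j ≠ i0 → σ j < σ i0 := by
    intro j hj hne
    have hle := hi0max j hj
    have : σ j ≠ σ i0 := fun hc => hne (σ.injective hc)
    exact lt_of_le_of_ne hle this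
  have hRprop : ∀ j ∈ R, i0 < j ∧ σ j < σ i0 := by
    intro j hj
    rw [hRdef, Finset.mem_filter] at hj
    exact ⟨hj.2, hsigma j hj.1 (ne_of_gt hj.2)⟩
  have hLprop : ∀ j ∈ L, j < i0 ∧ τ i0 < τ j := by
    intro j hj
    rw [hLdef, Finset.mem_filter] at hj
    have hs : σ j < σ i0 := hsigma j hj.1 (ne_of_lt hj.2)
    have hav := h j i0 hj.2
    have ht : ¬ τ j < τ i0 := fun hc => hav ⟨hs, hc⟩
    have : τ j ≠ τ i0 := fun hc => (ne_of_lt hj.2) (τ.injective hc)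
    exact ⟨hj.2, lt_of_le_of_ne (not_lt.mp ht) (Ne.symm this)⟩
  -- card decomposition
  have hcard : S.card = L.card + R.card + 1 := by
    have hsplit : S = insert i0 (L ∪ R) := by
      ext j
      simp only [Finset.mem_insert, Finset.mem_union, hLdef, hRdef, Finset.mem_filter]
      constructor
      · intro hj
        rcases lt_trichotomy j i0 with hlt | heq | hgt
        · exact Or.inr (Or.inl ⟨hj, hlt⟩)
        · exact Or.inl heq
        · exact Or.inr (Or.inr ⟨hj, hgt⟩)
      · rintro (rfl | ⟨hj, _⟩ | ⟨hj, _⟩) <;> first | exact hi0S | exact hj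
    have hnotmem : i0 ∉ L ∪ R := by
      simp only [Finset.mem_union, hLdef, hRdef, Finset.mem_filter]
      rintro (⟨_, hlt⟩ | ⟨_, hlt⟩) <;> exact lt_irrefl _ hlt
    have hdisj : Disjoint L R := by
      rw [Finset.disjoint_left]
      intro j hjL hjR
      rw [hLdef, Finset.mem_filter] at hjL
      rw [hRdef, Finset.mem_filter] at hjR
      exact lt_asymm hjL.2 hjR.2
    rw [hsplit, Finset.card_insert_of_notMem hnotmem, Finset.card_union_of_disjoint hdisj]
  -- bound on rInv σ i0
  have hrbound : a + (R.card : ℤ) ≤ (rInv σ i0 : ℤ) := by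
    rcases R.eq_empty_or_nonempty with hR | hR
    · simp [hR]
      exact (hmemS i0 hi0S).1
    · obtain ⟨jm, hjm, hjmax⟩ := R.exists_max_image (fun j => j) hR
      have key := rInv_ge_aux σ i0 R hRprop jm hjm hjmax
      have hjmS : jm ∈ S := (Finset.mem_filter.mp (hRdef ▸ hjm)).1
      have ha : a ≤ (rInv σ jm : ℤ) := (hmemS jm hjmS).1
      have : (rInv σ jm : ℤ) + R.card ≤ (rInv σ i0 : ℤ) := by exact_mod_cast key
      linarith
  -- bound on lInv τ i0
  have hlbound : b + (L.card : ℤ) ≤ (lInv τ i0 : ℤ) := by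
    rcases L.eq_empty_or_nonempty with hL | hL
    · simp [hL]
      exact (hmemS i0 hi0S).2.1
    · obtain ⟨j1, hj1, hjmin⟩ := L.exists_min_image (fun j => j) hL
      have key := lInv_ge_aux τ i0 L hLprop j1 hj1 hjmin
      have hj1S : j1 ∈ S := (Finset.mem_filter.mp (hLdef ▸ hj1)).1
      have hb : b ≤ (lInv τ j1 : ℤ) := (hmemS j1 hj1S).2.1
      have : (lInv τ j1 : ℤ) + L.card ≤ (lInv τ i0 : ℤ) := by exact_mod_cast key
      linarith
  have htri := (hmemS i0 hi0S).2.2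
  have hfin : (L.card : ℤ) + (R.card : ℤ) < (k : ℤ) := by linarith
  have : L.card + R.card < k := by exact_mod_cast hfin
  omega
end

section
/- Let (σ, τ) ∈ S_n² avoid the pattern (12,12), let I ⊆ {1,...,n} be nonempty, and let m ∈ I be the index at which σ restricted to I attains its maximum. If m is neither min I nor max I, then r_σ(m) + l_τ(m) ≥ |I| - 1 + r_σ(max I) + l_τ(min I). -/
theorem inv_bound_at_max {n : ℕ} (σ τ : Equiv.Perm (Fin n)) (h : Avoids1212 σ τ)
    (I : Finset (Fin n)) (hI : I.Nonempty) (m : Fin n) (hm : m ∈ I)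
    (hmax : ∀ i ∈ I, σ i ≤ σ m)
    (hmin' : m ≠ I.min' hI) (hmax' : m ≠ I.max' hI) :
    I.card - 1 + rInv σ (I.max' hI) + lInv τ (I.min' hI) ≤ rInv σ m + lInv τ m := by
  set M := I.max' hI with hM
  set μ := I.min' hI with hμ
  have hMI : M ∈ I := I.max'_mem hI
  have hμI : μ ∈ I := I.min'_mem hI
  have hmM : m < M := lt_of_le_of_ne (I.le_max' m hm) hmax'
  have hμm : μ < m := lt_of_le_of_ne (I.min'_le m hm) (fun e => hmin' e.symm)
  have hσ : ∀ i ∈ I, i ≠ m → σ i < σ m := fun i hi hne =>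
    lt_of_le_of_ne (hmax i hi) (fun e => hne (σ.injective e))
  have hτ : ∀ i ∈ I, i < m → τ m < τ i := by
    intro i hi hlt
    have h1 := h i m hlt
    have h2 : σ i < σ m := hσ i hi (ne_of_lt hlt)
    have h3 : ¬ τ i < τ m := fun ht => h1 ⟨h2, ht⟩
    rcases lt_or_gt_of_ne (fun e : τ i = τ m => (ne_of_lt hlt) (τ.injective e)) with h4 | h4
    · exact absurd h4 h3
    · exact h4
  have hr : (I.filter (fun i => m < i)).card + rInv σ M ≤ rInv σ m := by
    simp only [rInv]
    rw [← Finset.card_union_of_disjoint]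
    · apply Finset.card_le_card
      intro j hj
      simp only [Finset.mem_union, Finset.mem_filter, Finset.mem_univ, true_and] at hj ⊢
      rcases hj with ⟨hjI, hjm⟩ | ⟨hjM, hjσ⟩
      · exact ⟨hjm, hσ j hjI (ne_of_gt hjm)⟩
      · exact ⟨hmM.trans hjM, hjσ.trans_le (hmax M hMI)⟩
    · rw [Finset.disjoint_left]
      intro j hj hj'
      simp only [Finset.mem_filter, Finset.mem_univ, true_and] at hj hj'
      exact absurd hj'.1 (not_lt.2 (I.le_max' j hj.1))
  have hl : (I.filter (fun i => i < m)).card + lInv τ μ ≤ lInv τ m := by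
    simp only [lInv]
    rw [← Finset.card_union_of_disjoint]
    · apply Finset.card_le_card
      intro j hj
      simp only [Finset.mem_union, Finset.mem_filter, Finset.mem_univ, true_and] at hj ⊢
      rcases hj with ⟨hjI, hjm⟩ | ⟨hjμ, hjτ⟩
      · exact ⟨hjm, hτ j hjI hjm⟩
      · exact ⟨hjμ.trans hμm, (hτ μ hμI hμm).trans hjτ⟩
    · rw [Finset.disjoint_left]
      intro j hj hj'
      simp only [Finset.mem_filter, Finset.mem_univ, true_and] at hj hj'
      exact absurd hj'.1 (not_lt.2 (I.min'_le j hj.1))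
  have hcard : (I.filter (fun i => i < m)).card + (I.filter (fun i => m < i)).card
      = I.card - 1 := by
    have hun : I.filter (fun i => i < m) ∪ I.filter (fun i => m < i) = I.erase m := by
      ext i
      simp only [Finset.mem_union, Finset.mem_filter, Finset.mem_erase]
      constructor
      · rintro (⟨hiI, hlt⟩ | ⟨hiI, hlt⟩)
        · exact ⟨ne_of_lt hlt, hiI⟩
        · exact ⟨ne_of_gt hlt, hiI⟩
      · rintro ⟨hne, hiI⟩
        rcases lt_or_gt_of_ne hne with h' | h'
        · exact Or.inl ⟨hiI, h'⟩
        · exact Or.inr ⟨hiI, h'⟩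
    have hdisj : Disjoint (I.filter (fun i => i < m)) (I.filter (fun i => m < i)) := by
      rw [Finset.disjoint_left]
      intro j hj hj'
      simp only [Finset.mem_filter] at hj hj'
      exact absurd hj'.2 (not_lt.2 (le_of_lt hj.2))
    rw [← Finset.card_union_of_disjoint hdisj, hun, Finset.card_erase_of_mem hm]
  omega
end

section
/- Let (σ, τ) ∈ S_n² avoid (12,12), let I ⊆ {1,...,n} be nonempty, and let m = max I be the index where σ restricted to I attains its maximum. Then l_τ(m) ≥ |I| - 1 + min{l_τ(i) : i ∈ I}. -/
/-- If `σ` restricted to `I` attains its maximum at `m = max I`, then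
`l_τ(m) ≥ |I| - 1 + min {l_τ(i) : i ∈ I}`. -/
theorem lInv_bound_at_max {n : ℕ} (σ τ : Equiv.Perm (Fin n)) (h : Avoids1212 σ τ)
    (I : Finset (Fin n)) (hI : I.Nonempty)
    (hmax : ∀ i ∈ I, σ i ≤ σ (I.max' hI)) :
    I.card - 1 + I.inf' hI (fun i => lInv τ i) ≤ lInv τ (I.max' hI) := by
  classical
  set m := I.max' hI with hm
  obtain ⟨i, hiI, hinf⟩ := I.exists_mem_eq_inf' hI (fun i => lInv τ i)
  set L : Fin n → Finset (Fin n) :=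
    fun a => Finset.univ.filter (fun j => j < a ∧ τ a < τ j) with hL
  have hLcard : ∀ a, lInv τ a = (L a).card := fun a => rfl
  -- τ m < τ k for all k in I other than m
  have hτm : ∀ k ∈ I, k ≠ m → τ m < τ k := by
    intro k hk hkm
    have hklt : k < m := lt_of_le_of_ne (I.le_max' k hk) hkm
    have hσ : σ k < σ m :=
      lt_of_le_of_ne (hmax k hk) (fun he => hkm (σ.injective he))
    have hav := h k m hklt
    have hnlt : ¬ τ k < τ m := fun hlt => hav ⟨hσ, hlt⟩
    have hne : τ m ≠ τ k := fun he => hkm (τ.injective he.symm)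
    exact lt_of_le_of_ne (le_of_not_gt hnlt) hne
  -- no element of I lies in L i (i is a min-achiever)
  have hnotin : ∀ k ∈ I, k ∉ L i := by
    intro k hk hkL
    simp only [hL, Finset.mem_filter, Finset.mem_univ, true_and] at hkL
    obtain ⟨hki, hτik⟩ := hkL
    have hsub : insert k (L k) ⊆ L i := by
      intro j hj
      rcases Finset.mem_insert.mp hj with rfl | hj
      · simp only [hL, Finset.mem_filter, Finset.mem_univ, true_and]
        exact ⟨hki, hτik⟩
      · simp only [hL, Finset.mem_filter, Finset.mem_univ, true_and] at hj ⊢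
        exact ⟨hj.1.trans hki, hτik.trans hj.2⟩
    have hknotmem : k ∉ L k := by
      simp [hL, lt_irrefl]
    have hcard : (L k).card + 1 ≤ (L i).card := by
      rw [← Finset.card_insert_of_notMem hknotmem]
      exact Finset.card_le_card hsub
    have h1 : I.inf' hI (fun i => lInv τ i) ≤ lInv τ k := Finset.inf'_le _ hk
    rw [hinf] at h1
    rw [hLcard k, hLcard i] at h1
    omega
  have hAsub : L i ⊆ L m := by
    by_cases him : i = m
    · rw [him]
    · intro j hj
      simp only [hL, Finset.mem_filter, Finset.mem_univ, true_and] at hj ⊢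
      have hτmi := hτm i hiI him
      have him' : i < m := lt_of_le_of_ne (I.le_max' i hiI) him
      exact ⟨hj.1.trans him', hτmi.trans hj.2⟩
  have hBsub : I.erase m ⊆ L m := by
    intro k hk
    obtain ⟨hkm, hkI⟩ := Finset.mem_erase.mp hk
    simp only [hL, Finset.mem_filter, Finset.mem_univ, true_and]
    exact ⟨lt_of_le_of_ne (I.le_max' k hkI) hkm, hτm k hkI hkm⟩
  have hdisj : Disjoint (L i) (I.erase m) := by
    rw [Finset.disjoint_left]
    intro k hkL hkE
    exact hnotin k (Finset.mem_of_mem_erase hkE) hkL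
  have hcard := Finset.card_le_card (Finset.union_subset hAsub hBsub)
  rw [Finset.card_union_of_disjoint hdisj] at hcard
  have hc : (I.erase m).card = I.card - 1 := Finset.card_erase_of_mem (I.max'_mem hI)
  have h1 : 1 ≤ I.card := Finset.card_pos.mpr hI
  rw [hinf, hLcard i, hLcard m]
  omega
end

section
/- The set of permutation pairs of size n avoiding (12,12) and (312,231) is stable under the rotation ρ : (σ, τ) ↦ (τ⁻¹, σ ∘ τ⁻¹). That is, if (σ,τ) ∈ S_n² avoids both patterns, then so does (τ⁻¹, σ ∘ τ⁻¹). -/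
/-- The pair `(σ,τ)` contains the pattern `(π₁,π₂)`. -/
def ContainsPat {n k : ℕ} (σ τ : Equiv.Perm (Fin n)) (π₁ π₂ : Equiv.Perm (Fin k)) : Prop :=
  ∃ f : Fin k → Fin n, StrictMono f ∧
    (∀ a b : Fin k, σ (f a) < σ (f b) ↔ π₁ a < π₁ b) ∧
    (∀ a b : Fin k, τ (f a) < τ (f b) ↔ π₂ a < π₂ b)

/-- The permutation 312 (sending 1,2,3 to 3,1,2), 0-based. -/
def p312 : Equiv.Perm (Fin 3) := (finRotate 3)⁻¹

/-- The permutation 231 (sending 1,2,3 to 2,3,1), 0-based. -/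
def p231 : Equiv.Perm (Fin 3) := finRotate 3

/-- `(σ,τ)` avoids both `(12,12)` and `(312,231)`. -/
def AvoidsBoth {n : ℕ} (σ τ : Equiv.Perm (Fin n)) : Prop :=
  ¬ ContainsPat σ τ (1 : Equiv.Perm (Fin 2)) (1 : Equiv.Perm (Fin 2)) ∧
  ¬ ContainsPat σ τ p312 p231

/-- If the rotated pair contains `(π₁,π₂)`, the original pair contains the
rotated pattern `(π₂π₁⁻¹, π₁⁻¹)`. -/
lemma rot_contains {n k : ℕ} (σ τ : Equiv.Perm (Fin n)) (π₁ π₂ : Equiv.Perm (Fin k))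
    (h : ContainsPat τ⁻¹ (σ * τ⁻¹) π₁ π₂) :
    ContainsPat σ τ (π₂ * π₁⁻¹) π₁⁻¹ := by
  obtain ⟨f, hf, h1, h2⟩ := h
  refine ⟨fun c => τ⁻¹ (f (π₁⁻¹ c)), ?_, ?_, ?_⟩
  · intro c d hcd
    have := (h1 (π₁⁻¹ c) (π₁⁻¹ d)).mpr (by simpa using hcd)
    simpa using this
  · intro a b
    have := h2 (π₁⁻¹ a) (π₁⁻¹ b)
    simpa using this
  · intro a b
    simp [hf.lt_iff_lt]

/-- The avoidance class is stable under the rotation $(σ,τ) ↦ (τ⁻¹, σ ∘ τ⁻¹)$. -/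
theorem rotation_stable {n : ℕ} (σ τ : Equiv.Perm (Fin n)) (h : AvoidsBoth σ τ) :
    AvoidsBoth τ⁻¹ (σ * τ⁻¹) := by
  constructor
  · intro hc
    have := rot_contains σ τ 1 1 hc
    simpa using h.1 (by simpa using this)
  · intro hc
    have := rot_contains σ τ p312 p231 hc
    have e1 : p231 * p312⁻¹ = p312 := by decide
    have e2 : p312⁻¹ = p231 := by decide
    rw [e1, e2] at this
    exact h.2 this
end

section
/- For any permutation τ ∈ S_n, the pair (w₀, τ), where w₀ is the reversal permutation i ↦ n+1-i, avoids both patterns (12,12) and (312,231). Consequently, |Av_n((12,12),(312,231))| ≥ n!. -/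
/-- For any $τ$, the pair $(w₀, τ)$ avoids both $(12,12)$ and $(312,231)$;
consequently $|Av_n((12,12),(312,231))| ≥ n!$. -/
theorem revPerm_pair_avoids (n : ℕ) :
    (∀ τ : Equiv.Perm (Fin n), AvoidsBoth (Fin.revPerm : Equiv.Perm (Fin n)) τ) ∧
    Nat.factorial n ≤
      Nat.card {p : Equiv.Perm (Fin n) × Equiv.Perm (Fin n) // AvoidsBoth p.1 p.2} := by
  have key : ∀ τ : Equiv.Perm (Fin n), AvoidsBoth (Fin.revPerm : Equiv.Perm (Fin n)) τ := by
    intro τ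
    constructor
    · rintro ⟨f, hf, h1, -⟩
      have h01 : f 0 < f 1 := hf (by decide)
      have := (h1 0 1).mpr (by decide)
      simp only [Fin.revPerm_apply] at this
      exact absurd (Fin.rev_lt_rev.mp this) (not_lt.mpr h01.le)
    · rintro ⟨f, hf, h1, -⟩
      have h12 : f 1 < f 2 := hf (by decide)
      have := (h1 1 2).mpr (by decide)
      simp only [Fin.revPerm_apply] at this
      exact absurd (Fin.rev_lt_rev.mp this) (not_lt.mpr h12.le)
  refine ⟨key, ?_⟩
  have hinj : Function.Injective (fun τ : Equiv.Perm (Fin n) =>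
      (⟨(Fin.revPerm, τ), key τ⟩ :
        {p : Equiv.Perm (Fin n) × Equiv.Perm (Fin n) // AvoidsBoth p.1 p.2})) := by
    intro a b h
    simpa using congrArg (fun x => x.1.2) h
  calc Nat.factorial n = Nat.card (Equiv.Perm (Fin n)) := by
        simp [Nat.card_eq_fintype_card, Fintype.card_perm]
    _ ≤ _ := Nat.card_le_card_of_injective _ hinj
end

section
/- If B₁ is a triangle basis of size k₁ and B₂ a triangle basis of size k₂, then for any shift 0 ≤ h ≤ k₁ the vertically shifted sum B₁ ⊖ₕ B₂ := ((k₂,0) + B₁) ∪ ((0,h) + B₂) is a triangle basis of size k₁ + k₂, i.e., its filling is T_{k₁+k₂}. -/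
/-!
The filling of a translate is the translate of the filling, so the filling of the shifted sum
contains `(k₂, 0) + T_{k₁}` and `(0, h) + T_{k₂}`. The remaining cells of `T_{k₁+k₂}` lie in the
columns `x < k₂`, which are filled from right to left: once column `x + 1` is full, column `x`
contains the cell `(x, h)` of `(0, h) + T_{k₂}`, and filling steps propagate upwards from it using
`(x, z), (x + 1, z) ↦ (x, z + 1)` and downwards using `(x + 1, z), (x, z + 1) ↦ (x, z)`. The
condition `h ≤ k₁` keeps this seed inside `T_{k₁+k₂}`. The reverse inclusion holds because
`T_{k₁+k₂}` is fill-closed and contains both shifted bases.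
-/

/-- A set of cells is closed under filling steps: whenever two of the three
cells `(x,y)`, `(x+1,y)`, `(x,y+1)` belong to it, the third does too. -/
def FillClosed (S : Set (ℤ × ℤ)) : Prop :=
  ∀ x y : ℤ,
    (((x, y) ∈ S ∧ (x + 1, y) ∈ S) ∨ ((x, y) ∈ S ∧ (x, y + 1) ∈ S) ∨
      ((x + 1, y) ∈ S ∧ (x, y + 1) ∈ S)) →
    ((x, y) ∈ S ∧ (x + 1, y) ∈ S ∧ (x, y + 1) ∈ S)

/-- The filling of `P`: the smallest superset of `P` closed under filling steps. -/
def fill (P : Set (ℤ × ℤ)) : Set (ℤ × ℤ) :=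
  ⋂₀ {S : Set (ℤ × ℤ) | P ⊆ S ∧ FillClosed S}

/-- The triangle $T_n$. -/
def triangle (n : ℕ) : Set (ℤ × ℤ) :=
  {p | 0 ≤ p.1 ∧ 0 ≤ p.2 ∧ p.1 + p.2 < (n : ℤ)}

lemma subset_fill (P : Set (ℤ × ℤ)) : P ⊆ fill P :=
  fun _ hp => Set.mem_sInter.mpr fun _ hS => hS.1 hp

lemma fill_subset {P S : Set (ℤ × ℤ)} (hPS : P ⊆ S) (hS : FillClosed S) : fill P ⊆ S :=
  Set.sInter_subset_of_mem ⟨hPS, hS⟩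

lemma fill_mono {P Q : Set (ℤ × ℤ)} (hPQ : P ⊆ Q) : fill P ⊆ fill Q :=
  Set.sInter_subset_sInter fun _ hS => ⟨hPQ.trans hS.1, hS.2⟩

lemma FillClosed.sInter {𝒮 : Set (Set (ℤ × ℤ))} (h𝒮 : ∀ S ∈ 𝒮, FillClosed S) :
    FillClosed (⋂₀ 𝒮) := by
  intro x y hxy
  simp only [Set.mem_sInter] at hxy ⊢
  have key := fun S hS => h𝒮 S hS x y <| by
    rcases hxy with ⟨h₁, h₂⟩ | ⟨h₁, h₂⟩ | ⟨h₁, h₂⟩ <;> simp [h₁ S hS, h₂ S hS]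
  exact ⟨fun S hS => (key S hS).1, fun S hS => (key S hS).2.1, fun S hS => (key S hS).2.2⟩

lemma fillClosed_fill (P : Set (ℤ × ℤ)) : FillClosed (fill P) :=
  FillClosed.sInter fun _ hS => hS.2

lemma FillClosed.preimage_add {S : Set (ℤ × ℤ)} (hS : FillClosed S) (v : ℤ × ℤ) :
    FillClosed ((· + v) ⁻¹' S) := by
  intro x y hxy
  obtain ⟨a, b⟩ := v
  simp only [Set.mem_preimage, Prod.mk_add_mk, add_right_comm _ (1 : ℤ)] at hxy ⊢
  exact hS _ _ hxy

lemma image_add_fill_subset (P : Set (ℤ × ℤ)) (v : ℤ × ℤ) :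
    (· + v) '' fill P ⊆ fill ((· + v) '' P) :=
  Set.image_subset_iff.mpr <|
    fill_subset (Set.image_subset_iff.mp (subset_fill _)) ((fillClosed_fill _).preimage_add v)

lemma fillClosed_triangle (n : ℕ) : FillClosed (triangle n) := by
  intro x y hxy
  simp only [triangle, Set.mem_ofPred_eq] at hxy ⊢
  omega

lemma image_add_triangle_subset {n m : ℕ} {a b : ℤ} (ha : 0 ≤ a) (hb : 0 ≤ b)
    (hnm : a + b + n ≤ m) : (· + (a, b)) '' triangle n ⊆ triangle m := by
  rintro _ ⟨⟨x, y⟩, ⟨hx, hy, hxy⟩, rfl⟩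
  simp only [triangle, Prod.mk_add_mk, Set.mem_ofPred_eq] at hx hy hxy ⊢
  omega

section FillClosed

variable {S : Set (ℤ × ℤ)} (hS : FillClosed S) {x y : ℤ}
include hS

lemma FillClosed.mem_above (h₀ : (x, y) ∈ S) (h₁ : (x + 1, y) ∈ S) : (x, y + 1) ∈ S :=
  (hS x y (Or.inl ⟨h₀, h₁⟩)).2.2

lemma FillClosed.mem_of_right_of_above (h₁ : (x + 1, y) ∈ S) (h₂ : (x, y + 1) ∈ S) :
    (x, y) ∈ S :=
  (hS x y (Or.inr (Or.inr ⟨h₁, h₂⟩))).1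

lemma FillClosed.column_mem {m c : ℤ} (hcol : ∀ z, 0 ≤ z → z < m → (x + 1, z) ∈ S)
    (hseed : (x, c) ∈ S) (hc₀ : 0 ≤ c) (hcm : c ≤ m) (hy₀ : 0 ≤ y) (hym : y ≤ m) :
    (x, y) ∈ S := by
  rcases le_total c y with hcy | hyc
  · induction y, hcy using Int.leInduction with
    | base => exact hseed
    | succ z hcz ih =>
      exact hS.mem_above (ih (by omega) (by omega)) (hcol z (by omega) (by omega))
  · induction y, hyc using Int.leInductionDown with
    | base => exact hseed
    | pred z hzc ih =>
      refine hS.mem_of_right_of_above (hcol _ hy₀ (by omega)) ?_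
      rw [sub_add_cancel]
      exact ih (by omega) (by omega)

end FillClosed

lemma FillClosed.triangle_subset {S : Set (ℤ × ℤ)} (hS : FillClosed S) {k₁ k₂ h : ℕ}
    (hh : h ≤ k₁) (h₁ : (· + ((k₂ : ℤ), 0)) '' triangle k₁ ⊆ S)
    (h₂ : (· + (0, (h : ℤ))) '' triangle k₂ ⊆ S) : triangle (k₁ + k₂) ⊆ S := by
  have mem₁ : ∀ x y : ℤ, k₂ ≤ x → 0 ≤ y → x + y < k₁ + k₂ → (x, y) ∈ S :=
    fun x y hx hy hxy => h₁ ⟨(x - k₂, y), ⟨by omega, hy, by omega⟩, by simp⟩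
  have mem₂ : ∀ x y : ℤ, 0 ≤ x → h ≤ y → x + y < k₂ + h → (x, y) ∈ S :=
    fun x y hx hy hxy => h₂ ⟨(x, y - h), ⟨hx, by omega, by omega⟩, by simp⟩
  suffices columns : ∀ x ≤ (k₂ : ℤ), 0 ≤ x → ∀ y : ℤ, 0 ≤ y → x + y < k₁ + k₂ → (x, y) ∈ S by
    rintro ⟨x, y⟩ ⟨hx, hy, hxy⟩
    push_cast at hxy
    rcases le_total x k₂ with hxk | hkx
    exacts [columns x hxk hx y hy hxy, mem₁ x y hkx hy hxy]
  intro x hx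
  induction x, hx using Int.leInductionDown with
  | base => exact fun _ y hy hxy => mem₁ _ y le_rfl hy hxy
  | pred x hx ih =>
    intro hx₀ y hy hxy
    refine hS.column_mem (m := k₁ + k₂ - x) (c := h) (fun z hz hzm => ?_)
      (mem₂ _ _ hx₀ le_rfl (by omega)) (by omega) (by omega) hy (by omega)
    rw [sub_add_cancel]
    exact ih (by omega) z hz (by omega)

theorem shifted_sum_basis_general (k₁ k₂ h : ℕ) (B₁ B₂ : Set (ℤ × ℤ))
    (hf₁ : fill B₁ = triangle k₁)
    (hf₂ : fill B₂ = triangle k₂)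
    (hh : h ≤ k₁) :
    fill ((fun p : ℤ × ℤ => (p.1 + (k₂ : ℤ), p.2)) '' B₁ ∪
          (fun p : ℤ × ℤ => (p.1, p.2 + (h : ℤ))) '' B₂) = triangle (k₁ + k₂) := by
  have shift₁ : (fun p : ℤ × ℤ => (p.1 + (k₂ : ℤ), p.2)) = (· + ((k₂ : ℤ), 0)) := by
    ext <;> simp
  have shift₂ : (fun p : ℤ × ℤ => (p.1, p.2 + (h : ℤ))) = (· + (0, (h : ℤ))) := by
    ext <;> simp
  rw [shift₁, shift₂]
  apply subset_antisymm
  · refine fill_subset (Set.union_subset ?_ ?_) (fillClosed_triangle _)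
    · exact (Set.image_mono (hf₁ ▸ subset_fill B₁)).trans
        (image_add_triangle_subset (by positivity) le_rfl (by push_cast; omega))
    · exact (Set.image_mono (hf₂ ▸ subset_fill B₂)).trans
        (image_add_triangle_subset le_rfl (by positivity) (by push_cast; omega))
  · refine (fillClosed_fill _).triangle_subset hh ?_ ?_
    · rw [← hf₁]
      exact (image_add_fill_subset B₁ _).trans (fill_mono Set.subset_union_left)
    · rw [← hf₂]
      exact (image_add_fill_subset B₂ _).trans (fill_mono Set.subset_union_right)

/-- A vertically shifted sum of two triangle bases is a triangle basis. -/
theorem shifted_sum_basis (k₁ k₂ h : ℕ) (B₁ B₂ : Set (ℤ × ℤ))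
    (hB₁ : B₁ ⊆ triangle k₁) (hc₁ : B₁.ncard = k₁) (hf₁ : fill B₁ = triangle k₁)
    (hB₂ : B₂ ⊆ triangle k₂) (hc₂ : B₂.ncard = k₂) (hf₂ : fill B₂ = triangle k₂)
    (hh : h ≤ k₁) :
    fill ((fun p : ℤ × ℤ => (p.1 + (k₂ : ℤ), p.2)) '' B₁ ∪
          (fun p : ℤ × ℤ => (p.1, p.2 + (h : ℤ))) '' B₂) = triangle (k₁ + k₂) :=
  shifted_sum_basis_general k₁ k₂ h B₁ B₂ hf₁ hf₂ hh
end

section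
/- Let (σ,τ) ∈ S_n² avoid (12,12), and suppose the last index n satisfies σ(n) = 1. Then the pair admits a 'vertical cut isolating n': for every i < n, n ∈ R_σ(i), and hence Γ(σ,τ) decomposes as the vertically shifted sum of Γ of the restriction to {1,...,n-1} (translated by (1,0)) together with the single point (0, l_τ(n)). -/
/-- The configuration `Γ(σ,τ)` as a set of points. -/
def Gamma {n : ℕ} (σ τ : Equiv.Perm (Fin n)) : Set (ℕ × ℕ) :=
  {p | ∃ i : Fin n, p = (rInv σ i, lInv τ i)}

/-- If `(σ,τ)` avoids `(12,12)` (on `n+1` indices, 0-based) and the last index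
takes the minimal value under `σ`, then the last index lies in `R_σ(i)` for
every other index `i`, and `Γ(σ,τ)` is the vertically shifted sum of the
translate by `(1,0)` of `Γ(σ',τ')`, where `(σ',τ')` is the standardized
restriction of `(σ,τ)` to the first `n` indices, with the single point
`(0, l_τ(n+1))`. -/
theorem vertical_cut_isolating_last {n : ℕ} (σ τ : Equiv.Perm (Fin (n + 1)))
    (hav : Avoids1212 σ τ) (hσ : σ (Fin.last n) = 0)
    (σ' τ' : Equiv.Perm (Fin n))
    (hσ' : ∀ i : Fin n, ((σ' i : ℕ)) = (σ i.castSucc : ℕ) - 1)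
    (hτ' : ∀ i : Fin n, ((τ' i : ℕ)) =
      if (τ i.castSucc : ℕ) < (τ (Fin.last n) : ℕ) then (τ i.castSucc : ℕ)
      else (τ i.castSucc : ℕ) - 1) :
    (∀ i : Fin (n + 1), i ≠ Fin.last n → (i < Fin.last n ∧ σ (Fin.last n) < σ i)) ∧
    Gamma σ τ = (fun p : ℕ × ℕ => (p.1 + 1, p.2)) '' Gamma σ' τ' ∪
      {(0, lInv τ (Fin.last n))} := by
  have hinj : Function.Injective σ := σ.injective
  have hτinj : Function.Injective τ := τ.injective
  have hne : ∀ i : Fin n, (σ i.castSucc : ℕ) ≠ 0 := by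
    intro i h
    have h0 : σ i.castSucc = σ (Fin.last n) := by
      rw [hσ]; exact Fin.ext h
    exact (Fin.castSucc_lt_last i).ne (hinj h0)
  have hτne : ∀ i : Fin n, (τ i.castSucc : ℕ) ≠ (τ (Fin.last n) : ℕ) := by
    intro i h
    exact (Fin.castSucc_lt_last i).ne (hτinj (Fin.ext h))
  have hσord : ∀ a b : Fin n, (σ' a < σ' b ↔ σ a.castSucc < σ b.castSucc) := by
    intro a b
    have ha := hne a; have hb := hne b
    rw [Fin.lt_def, Fin.lt_def, hσ' a, hσ' b]
    omega
  have hτord : ∀ a b : Fin n, (τ' a < τ' b ↔ τ a.castSucc < τ b.castSucc) := by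
    intro a b
    have ha := hτne a; have hb := hτne b
    rw [Fin.lt_def, Fin.lt_def, hτ' a, hτ' b]
    split_ifs <;> omega
  have huniv : (Finset.univ : Finset (Fin (n+1))) =
      insert (Fin.last n) (Finset.univ.map Fin.castSuccEmb) := by
    ext j
    simp only [Finset.mem_univ, Finset.mem_insert, Finset.mem_map, Fin.castSuccEmb,
      Function.Embedding.coeFn_mk, true_iff]
    rcases Fin.eq_castSucc_or_eq_last j with ⟨k, rfl⟩ | rfl
    · exact Or.inr ⟨k, trivial, rfl⟩
    · exact Or.inl rfl
  have hr : ∀ i : Fin n, rInv σ i.castSucc = rInv σ' i + 1 := by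
    intro i
    unfold rInv
    rw [huniv, Finset.filter_insert]
    have hplast : i.castSucc < Fin.last n ∧ σ (Fin.last n) < σ i.castSucc := by
      refine ⟨Fin.castSucc_lt_last i, ?_⟩
      rw [hσ, Fin.lt_def]
      simpa using Nat.pos_of_ne_zero (hne i)
    have hnm : Fin.last n ∉ Finset.filter
        (fun j => i.castSucc < j ∧ σ j < σ i.castSucc)
        (Finset.univ.map Fin.castSuccEmb) := by
      intro hmem
      rw [Finset.mem_filter, Finset.mem_map] at hmem
      obtain ⟨⟨j, _, hj⟩, _⟩ := hmem
      exact (Fin.castSucc_lt_last j).ne hj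
    have hfe : Finset.filter ((fun j => i.castSucc < j ∧ σ j < σ i.castSucc) ∘
          ⇑Fin.castSuccEmb) Finset.univ
        = Finset.filter (fun j => i < j ∧ σ' j < σ' i) Finset.univ := by
      apply Finset.filter_congr
      intro j _
      show i.castSucc < j.castSucc ∧ σ j.castSucc < σ i.castSucc ↔ _
      rw [Fin.castSucc_lt_castSucc_iff, hσord j i]
    rw [if_pos hplast, Finset.card_insert_of_notMem hnm, Finset.filter_map, hfe,
      Finset.card_map]
  have hl : ∀ i : Fin n, lInv τ i.castSucc = lInv τ' i := by
    intro i
    unfold lInv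
    have hfe : Finset.filter ((fun j => j < i.castSucc ∧ τ i.castSucc < τ j) ∘
          ⇑Fin.castSuccEmb) Finset.univ
        = Finset.filter (fun j => j < i ∧ τ' i < τ' j) Finset.univ := by
      apply Finset.filter_congr
      intro j _
      show j.castSucc < i.castSucc ∧ τ i.castSucc < τ j.castSucc ↔ _
      rw [Fin.castSucc_lt_castSucc_iff, hτord i j]
    rw [huniv, Finset.filter_insert, if_neg, Finset.filter_map, hfe,
      Finset.card_map]
    rintro ⟨h1, -⟩
    exact absurd h1 (Fin.le_last i.castSucc).not_gt
  have hrlast : rInv σ (Fin.last n) = 0 := by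
    unfold rInv
    rw [Finset.card_eq_zero, Finset.filter_eq_empty_iff]
    rintro j - ⟨h1, -⟩
    exact absurd h1 (Fin.le_last j).not_gt
  refine ⟨?_, ?_⟩
  · intro i hi
    have h1 : i < Fin.last n := lt_of_le_of_ne (Fin.le_last i) hi
    refine ⟨h1, ?_⟩
    rw [hσ]
    have h0 : σ i ≠ 0 := by
      intro h
      exact hi (hinj (h.trans hσ.symm))
    exact Fin.pos_of_ne_zero h0
  · ext p
    simp only [Gamma, Set.mem_union, Set.mem_image, Set.mem_setOf_eq,
      Set.mem_singleton_iff]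
    constructor
    · rintro ⟨i, rfl⟩
      cases i using Fin.lastCases with
      | last => right; rw [hrlast]
      | cast j =>
        left
        exact ⟨(rInv σ' j, lInv τ' j), ⟨j, rfl⟩, by rw [hr, hl]⟩
    · rintro (⟨q, ⟨j, rfl⟩, rfl⟩ | rfl)
      · exact ⟨j.castSucc, by rw [hr, hl]⟩
      · exact ⟨Fin.last n, by rw [hrlast]⟩
end
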